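/- Let m ≥ 1, let O ⊆ ℝ^m be a nonempty open convex set, let f : O → ℝ be convex, let x̄ ∈ O, and suppose (f_t)_{t∈T} is a lower-C² representation of f on an open neighbourhood V of x̄ with V ⊆ O. Let A(x̄) = argmax_{t∈T} f_t(x̄). Then ∂f(x̄) equals the convex hull of {∇f_t(x̄) : t ∈ A(x̄)}. -/

import Mathlib

open scoped RealInnerProductSpace

/-- The subdifferential of `f : O → ℝ` at `x`:
`∂f(x) = {v : f(y) ≥ f(x) + ⟪v, y - x⟫ for all y ∈ O}`. -/
def subdiff {m : ℕ} (O : Set (EuclideanSpace ℝ (Fin m)))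
    (f : EuclideanSpace ℝ (Fin m) → ℝ) (x : EuclideanSpace ℝ (Fin m)) :
    Set (EuclideanSpace ℝ (Fin m)) :=
  {v | ∀ y ∈ O, f x + ⟪v, y - x⟫ ≤ f y}

/-- `(ft t)_{t ∈ T}` is a lower-C² representation of `f` on the set `V`: each `ft t`
is C² on `V`, the values, gradients and Hessians depend continuously on
`(t, x) ∈ T × V`, and `f = max_{t ∈ T} ft t` on `V` (the maximum being attained). -/
def IsLowerC2Rep {m : ℕ} (T : Type) [TopologicalSpace T]
    (f : EuclideanSpace ℝ (Fin m) → ℝ)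
    (ft : T → EuclideanSpace ℝ (Fin m) → ℝ)
    (V : Set (EuclideanSpace ℝ (Fin m))) : Prop :=
  (∀ t : T, ContDiffOn ℝ 2 (ft t) V) ∧
  ContinuousOn (fun p : T × EuclideanSpace ℝ (Fin m) => ft p.1 p.2)
    (Set.univ ×ˢ V) ∧
  ContinuousOn (fun p : T × EuclideanSpace ℝ (Fin m) => gradient (ft p.1) p.2)
    (Set.univ ×ˢ V) ∧
  ContinuousOn
    (fun p : T × EuclideanSpace ℝ (Fin m) => fderiv ℝ (gradient (ft p.1)) p.2)
    (Set.univ ×ˢ V) ∧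
  (∀ x ∈ V, (∀ t : T, ft t x ≤ f x) ∧ (∃ t : T, ft t x = f x))

/-! Each active gradient `∇f_t(x̄)` is a subgradient: `f_t` touches the convex function `f` from
below at `x̄`, so its derivative along `y - x̄` is bounded by the chord slope `f y - f x̄`; as the
subdifferential is convex, it contains the whole hull.

Conversely, the active gradients form a compact set, so by Carathéodory their convex hull is
closed. A subgradient `v` outside it is strictly separated by a direction `d`:
`⟪∇f_t(x̄), d⟫ < u < ⟪v, d⟫` for all active `t`. Near each active `t` the functions `f_t'` grow
with slope `< u` along `d`, and near each inactive `t` they stay strictly below `f x̄`; by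
compactness of `T` this gives `f (x̄ + s • d) ≤ f x̄ + s * u` for small `s > 0`, contradicting
the subgradient inequality `f x̄ + s * ⟪v, d⟫ ≤ f (x̄ + s • d)`. -/

open Set Filter Topology

theorem convexHull_eq_image_stdSimplex_finrank_succ {E : Type*} [AddCommGroup E] [Module ℝ E]
    [FiniteDimensional ℝ E] (s : Set E) :
    convexHull ℝ s = (fun p : (Fin (Module.finrank ℝ E + 1) → ℝ) ×
        (Fin (Module.finrank ℝ E + 1) → E) => ∑ i, p.1 i • p.2 i) ''
      (stdSimplex ℝ (Fin (Module.finrank ℝ E + 1)) ×ˢ univ.pi fun _ => s) := by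
  classical
  set n := Module.finrank ℝ E + 1
  refine Subset.antisymm (fun x hx => ?_) ?_
  · obtain ⟨x₀, hx₀⟩ := convexHull_nonempty_iff.mp ⟨x, hx⟩
    obtain ⟨ι, _, z, w, hzs, hz, hw, hw₁, rfl⟩ := eq_pos_convex_span_of_mem_convexHull hx
    -- an affinely independent family has at most `n` members; embed it in `Fin n`, padding
    -- with weight `0`
    obtain ⟨e⟩ := Function.Embedding.nonempty_of_card_le (β := Fin n) <|
      hz.card_le_finrank_succ.trans
        ((Fintype.card_fin n).symm ▸ Nat.succ_le_succ (Submodule.finrank_le _))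
    set w' := Function.extend e w fun _ => 0
    set z' := Function.extend e z fun _ => x₀
    have hw' (i : ι) : w' (e i) = w i := e.injective.extend_apply _ _ i
    have hz' (i : ι) : z' (e i) = z i := e.injective.extend_apply _ _ i
    have hw'₀ (j : Fin n) (hj : j ∉ range e) : w' j = 0 := Function.extend_apply' _ _ _ hj
    have hz'₀ (j : Fin n) (hj : j ∉ range e) : z' j = x₀ := Function.extend_apply' _ _ _ hj
    refine ⟨(w', z'), ⟨⟨fun j => ?_, ?_⟩, fun j _ => ?_⟩, ?_⟩
    · by_cases hj : j ∈ range e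
      · obtain ⟨i, rfl⟩ := hj
        exact (hw i).le.trans (hw' i).ge
      · exact (hw'₀ j hj).ge
    · rw [← hw₁]
      exact (Fintype.sum_of_injective e e.injective _ _ hw'₀ fun i => (hw' i).symm).symm
    · show z' j ∈ s
      by_cases hj : j ∈ range e
      · obtain ⟨i, rfl⟩ := hj
        exact (hz' i).symm ▸ hzs ⟨i, rfl⟩
      · exact (hz'₀ j hj).symm ▸ hx₀
    · refine (Fintype.sum_of_injective e e.injective _ _ (fun j hj => ?_) fun i => ?_).symm
      · simp [hw'₀ j hj]
      · simp [hw', hz']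
  · rintro _ ⟨⟨w, z⟩, ⟨hw, hz⟩, rfl⟩
    exact (convex_convexHull ℝ s).sum_mem (fun i _ => hw.1 i) hw.2
      fun i _ => subset_convexHull ℝ s (hz i trivial)

theorem IsCompact.convexHull_of_finiteDimensional {E : Type*} [NormedAddCommGroup E]
    [NormedSpace ℝ E] [FiniteDimensional ℝ E] {s : Set E} (hs : IsCompact s) :
    IsCompact (convexHull ℝ s) := by
  rw [convexHull_eq_image_stdSimplex_finrank_succ]
  exact ((isCompact_stdSimplex _ _).prod (isCompact_univ_pi fun _ => hs)).image (by fun_prop)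

theorem tendsto_add_smul_nhds_zero {E : Type*} [NormedAddCommGroup E] [NormedSpace ℝ E]
    (x d : E) : Tendsto (fun s : ℝ => x + s • d) (𝓝 0) (𝓝 x) :=
  Continuous.tendsto' (by fun_prop) 0 x (by simp)

section Gradient
variable {E : Type*} [NormedAddCommGroup E] [InnerProductSpace ℝ E] [CompleteSpace E]

theorem DifferentiableAt.hasDerivAt_comp_add_smul {F : E → ℝ} {x d : E} {σ : ℝ}
    (hF : DifferentiableAt ℝ F (x + σ • d)) :
    HasDerivAt (fun τ : ℝ => F (x + τ • d)) ⟪gradient F (x + σ • d), d⟫ σ := by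
  have hline : HasDerivAt (fun τ : ℝ => x + τ • d) d σ := by
    simpa using ((hasDerivAt_id σ).smul_const d).const_add x
  exact (hasGradientAt_iff_hasFDerivAt.mp hF.hasGradientAt).comp_hasDerivAt σ hline
    |>.congr_deriv InnerProductSpace.toDual_apply_apply

theorem Convex.le_add_mul_of_inner_gradient_le {U : Set E} (hU : Convex ℝ U) {F : E → ℝ}
    (hF : ∀ y ∈ U, DifferentiableAt ℝ F y) {d : E} {u : ℝ}
    (hu : ∀ y ∈ U, ⟪gradient F y, d⟫ ≤ u) {x : E} (hx : x ∈ U) {s : ℝ} (hs : 0 ≤ s)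
    (hxs : x + s • d ∈ U) : F (x + s • d) ≤ F x + s * u := by
  have hseg : ∀ σ ∈ Icc 0 s, x + σ • d ∈ U := by
    rintro σ ⟨hσ₀, hσs⟩
    rcases hs.eq_or_lt with rfl | hs
    · rwa [le_antisymm hσs hσ₀, zero_smul, add_zero]
    · convert hU.add_smul_mem hx hxs ⟨div_nonneg hσ₀ hs.le, (div_le_one hs).2 hσs⟩ using 2
      rw [smul_smul, div_mul_cancel₀ _ hs.ne']
  have hderiv : ∀ σ ∈ Icc 0 s, HasDerivAt (fun τ : ℝ => F (x + τ • d))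
      ⟪gradient F (x + σ • d), d⟫ σ := fun σ hσ =>
    (hF _ (hseg σ hσ)).hasDerivAt_comp_add_smul
  have := (convex_Icc 0 s).image_sub_le_mul_sub_of_deriv_le
    (fun σ hσ => (hderiv σ hσ).continuousAt.continuousWithinAt)
    (fun σ hσ => (hderiv σ (interior_subset hσ)).differentiableAt.differentiableWithinAt)
    (fun σ hσ => (hderiv σ (interior_subset hσ)).deriv ▸ hu _ (hseg σ (interior_subset hσ)))
    0 (left_mem_Icc.2 hs) s (right_mem_Icc.2 hs) hs
  simp only [zero_smul, add_zero, sub_zero] at this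
  linarith

end Gradient

section Subdiff
variable {m : ℕ} {O : Set (EuclideanSpace ℝ (Fin m))} {f : EuclideanSpace ℝ (Fin m) → ℝ}
  {x : EuclideanSpace ℝ (Fin m)}

theorem convex_subdiff : Convex ℝ (subdiff O f x) := by
  intro a ha b hb wa wb hwa hwb hw y hy
  have := add_le_add (mul_le_mul_of_nonneg_left (ha y hy) hwa)
    (mul_le_mul_of_nonneg_left (hb y hy) hwb)
  rw [inner_add_left, real_inner_smul_left, real_inner_smul_left]
  linear_combination this + (f y - f x) * hw

theorem gradient_mem_subdiff_of_eventually_le (hf : ConvexOn ℝ O f) (hx : x ∈ O)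
    {φ : EuclideanSpace ℝ (Fin m) → ℝ} (hφ : DifferentiableAt ℝ φ x)
    (hle : ∀ᶠ y in 𝓝 x, φ y ≤ f y) (heq : φ x = f x) : gradient φ x ∈ subdiff O f x := by
  intro y hy
  set w := y - x
  have hslope : Tendsto (fun s : ℝ => s⁻¹ • (φ (x + s • w) - φ x)) (𝓝[>] 0)
      (𝓝 ⟪gradient φ x, w⟫) := by
    simpa using ((hasGradientAt_iff_hasFDerivAt.mp hφ.hasGradientAt).hasLineDerivAt w)
      |>.tendsto_slope_zero_right
  have hbound : ∀ᶠ s : ℝ in 𝓝[>] 0, s⁻¹ • (φ (x + s • w) - φ x) ≤ f y - f x := by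
    filter_upwards [nhdsWithin_le_nhds ((tendsto_add_smul_nhds_zero x w).eventually hle),
      Ioo_mem_nhdsGT one_pos] with s hφs ⟨hs₀, hs₁⟩
    have hconv : f (x + s • w) ≤ (1 - s) * f x + s * f y := by
      have := hf.2 hx hy (sub_nonneg.2 hs₁.le) hs₀.le (sub_add_cancel 1 s)
      rwa [show (1 - s) • x + s • y = x + s • w by module] at this
    rw [smul_eq_mul, inv_mul_le_iff₀ hs₀]
    linarith
  linarith [le_of_tendsto hslope hbound]

end Subdiff

namespace IsLowerC2Rep
variable {m : ℕ} {T : Type} [TopologicalSpace T] {f : EuclideanSpace ℝ (Fin m) → ℝ}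
  {ft : T → EuclideanSpace ℝ (Fin m) → ℝ} {V : Set (EuclideanSpace ℝ (Fin m))}
  {x : EuclideanSpace ℝ (Fin m)}

theorem apply_le (hrep : IsLowerC2Rep T f ft V) (hx : x ∈ V) (t : T) : ft t x ≤ f x :=
  (hrep.2.2.2.2 x hx).1 t

theorem exists_apply_eq (hrep : IsLowerC2Rep T f ft V) (hx : x ∈ V) : ∃ t, ft t x = f x :=
  (hrep.2.2.2.2 x hx).2

theorem differentiableAt (hrep : IsLowerC2Rep T f ft V) (hV : IsOpen V) (hx : x ∈ V) (t : T) :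
    DifferentiableAt ℝ (ft t) x :=
  ((hrep.1 t).differentiableOn (by norm_num)).differentiableAt (hV.mem_nhds hx)

theorem continuousAt_uncurry (hrep : IsLowerC2Rep T f ft V) (hV : IsOpen V) (hx : x ∈ V)
    (t : T) : ContinuousAt (fun p : T × EuclideanSpace ℝ (Fin m) => ft p.1 p.2) (t, x) :=
  hrep.2.1.continuousAt ((isOpen_univ.prod hV).mem_nhds ⟨trivial, hx⟩)

theorem continuousAt_gradient_uncurry (hrep : IsLowerC2Rep T f ft V) (hV : IsOpen V)
    (hx : x ∈ V) (t : T) :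
    ContinuousAt (fun p : T × EuclideanSpace ℝ (Fin m) => gradient (ft p.1) p.2) (t, x) :=
  hrep.2.2.1.continuousAt ((isOpen_univ.prod hV).mem_nhds ⟨trivial, hx⟩)

theorem isCompact_image_gradient_active [CompactSpace T] (hrep : IsLowerC2Rep T f ft V)
    (hV : IsOpen V) (hx : x ∈ V) :
    IsCompact ((fun t => gradient (ft t) x) '' {t : T | ft t x = f x}) := by
  have hval : Continuous fun t => ft t x := continuous_iff_continuousAt.2 fun t =>
    (hrep.continuousAt_uncurry hV hx t).comp (f := fun t' => (t', x)) (by fun_prop)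
  have hgrad : Continuous fun t => gradient (ft t) x := continuous_iff_continuousAt.2 fun t =>
    (hrep.continuousAt_gradient_uncurry hV hx t).comp (f := fun t' => (t', x)) (by fun_prop)
  exact (isClosed_eq hval continuous_const).isCompact.image hgrad

theorem gradient_mem_subdiff {O : Set (EuclideanSpace ℝ (Fin m))} (hf : ConvexOn ℝ O f)
    (hrep : IsLowerC2Rep T f ft V) (hV : IsOpen V) (hVO : V ⊆ O) (hx : x ∈ V) {t : T}
    (ht : ft t x = f x) : gradient (ft t) x ∈ subdiff O f x :=
  gradient_mem_subdiff_of_eventually_le hf (hVO hx) (hrep.differentiableAt hV hx t)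
    (Eventually.mono (hV.mem_nhds hx) fun _ hy => hrep.apply_le hy t) ht

theorem eventually_le_add_mul_of_lt (hrep : IsLowerC2Rep T f ft V) (hV : IsOpen V) (hx : x ∈ V)
    {t : T} (ht : ft t x < f x) (d : EuclideanSpace ℝ (Fin m)) (u : ℝ) :
    ∀ᶠ p : ℝ × T in 𝓝 (0, t), ft p.2 (x + p.1 • d) ≤ f x + p.1 * u := by
  have hc : ContinuousAt (fun p : ℝ × T => ft p.2 (x + p.1 • d) - p.1 * u) (0, t) :=
    ((hrep.continuousAt_uncurry hV hx t).comp_of_eq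
      (f := fun p : ℝ × T => (p.2, x + p.1 • d)) (by fun_prop) (by simp)).sub (by fun_prop)
  filter_upwards [hc.eventually (gt_mem_nhds (by simpa using ht))] with p hp
  linarith

theorem eventually_le_add_mul_of_inner_gradient_lt (hrep : IsLowerC2Rep T f ft V) (hV : IsOpen V)
    (hx : x ∈ V) {t : T} {d : EuclideanSpace ℝ (Fin m)} {u : ℝ}
    (hd : ⟪gradient (ft t) x, d⟫ < u) :
    ∀ᶠ p : ℝ × T in 𝓝 (0, t), 0 ≤ p.1 → ft p.2 (x + p.1 • d) ≤ f x + p.1 * u := by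
  have hc : ContinuousAt (fun q : T × EuclideanSpace ℝ (Fin m) => ⟪gradient (ft q.1) q.2, d⟫)
      (t, x) := (hrep.continuousAt_gradient_uncurry hV hx t).inner continuousAt_const
  obtain ⟨N, hN, U, hU, hNU⟩ := mem_nhds_prod_iff.1 (hc.eventually (gt_mem_nhds hd))
  obtain ⟨r, hr, hrUV⟩ := Metric.mem_nhds_iff.1 (inter_mem hU (hV.mem_nhds hx))
  rw [nhds_prod_eq]
  filter_upwards [prod_mem_prod ((tendsto_add_smul_nhds_zero x d).eventually
    (Metric.isOpen_ball.mem_nhds (Metric.mem_ball_self hr))) hN] with ⟨s, t'⟩ ⟨hs, ht'⟩ hs₀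
  have hdiff : ∀ y ∈ Metric.ball x r, DifferentiableAt ℝ (ft t') y := fun y hy =>
    hrep.differentiableAt hV (hrUV hy).2 t'
  have hgrad : ∀ y ∈ Metric.ball x r, ⟪gradient (ft t') y, d⟫ ≤ u := fun y hy =>
    (hNU (mk_mem_prod ht' (hrUV hy).1)).le
  calc ft t' (x + s • d) ≤ ft t' x + s * u :=
        (convex_ball x r).le_add_mul_of_inner_gradient_le hdiff hgrad
          (Metric.mem_ball_self hr) hs₀ hs
    _ ≤ f x + s * u := by linarith [hrep.apply_le hx t']

theorem eventually_le_add_mul [CompactSpace T] (hrep : IsLowerC2Rep T f ft V) (hV : IsOpen V)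
    (hx : x ∈ V) {d : EuclideanSpace ℝ (Fin m)} {u : ℝ}
    (hd : ∀ t, ft t x = f x → ⟪gradient (ft t) x, d⟫ < u) :
    ∀ᶠ s : ℝ in 𝓝[>] 0, f (x + s • d) ≤ f x + s * u := by
  have hloc : ∀ t ∈ (univ : Set T),
      ∀ᶠ p : ℝ × T in 𝓝 (0, t), 0 ≤ p.1 → ft p.2 (x + p.1 • d) ≤ f x + p.1 * u := by
    intro t _
    rcases (hrep.apply_le hx t).lt_or_eq with hlt | heq
    · exact (hrep.eventually_le_add_mul_of_lt hV hx hlt d u).mono fun p hp _ => hp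
    · exact hrep.eventually_le_add_mul_of_inner_gradient_lt hV hx (hd t heq)
  filter_upwards [nhdsWithin_le_nhds (isCompact_univ.eventually_forall_of_forall_eventually
      (P := fun s t => 0 ≤ s → ft t (x + s • d) ≤ f x + s * u) hloc),
    nhdsWithin_le_nhds ((tendsto_add_smul_nhds_zero x d).eventually (hV.mem_nhds hx)),
    self_mem_nhdsWithin] with s hs hsV (hs₀ : 0 < s)
  obtain ⟨t, ht⟩ := hrep.exists_apply_eq hsV
  exact ht ▸ hs t trivial hs₀.le

theorem subdiff_subset_convexHull [CompactSpace T] {O : Set (EuclideanSpace ℝ (Fin m))}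
    (hrep : IsLowerC2Rep T f ft V) (hV : IsOpen V) (hVO : V ⊆ O) (hx : x ∈ V) :
    subdiff O f x ⊆ convexHull ℝ ((fun t => gradient (ft t) x) '' {t : T | ft t x = f x}) := by
  intro v hv
  by_contra hvC
  obtain ⟨ℓ, u, hℓ, hu⟩ := geometric_hahn_banach_closed_point (convex_convexHull ℝ _)
    (hrep.isCompact_image_gradient_active hV hx).convexHull_of_finiteDimensional.isClosed hvC
  set d := (InnerProductSpace.toDual ℝ (EuclideanSpace ℝ (Fin m))).symm ℓ
  have hd (y : EuclideanSpace ℝ (Fin m)) : ⟪y, d⟫ = ℓ y := by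
    rw [real_inner_comm]
    exact InnerProductSpace.toDual_symm_apply
  have hdecr : ∀ᶠ s : ℝ in 𝓝[>] 0, f (x + s • d) ≤ f x + s * u :=
    hrep.eventually_le_add_mul hV hx fun t ht =>
      (hd _).trans_lt (hℓ _ (subset_convexHull ℝ _ ⟨t, ht, rfl⟩))
  obtain ⟨s, hs₀, hs, hsV⟩ := (eventually_mem_nhdsWithin.and (hdecr.and
    (nhdsWithin_le_nhds ((tendsto_add_smul_nhds_zero x d).eventually (hV.mem_nhds hx))))).exists
  have hsub := hv _ (hVO hsV)
  rw [add_sub_cancel_left, real_inner_smul_right, hd] at hsub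
  linarith [mul_lt_mul_of_pos_left hu (show (0 : ℝ) < s from hs₀)]

end IsLowerC2Rep

theorem subdifferential_of_lowerC2_general {m : ℕ}
    (O : Set (EuclideanSpace ℝ (Fin m)))
    (f : EuclideanSpace ℝ (Fin m) → ℝ) (hf : ConvexOn ℝ O f)
    (xbar : EuclideanSpace ℝ (Fin m))
    (V : Set (EuclideanSpace ℝ (Fin m))) (hVopen : IsOpen V) (hxV : xbar ∈ V)
    (hVO : V ⊆ O)
    (T : Type) [TopologicalSpace T] [CompactSpace T]
    (ft : T → EuclideanSpace ℝ (Fin m) → ℝ)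
    (hrep : IsLowerC2Rep T f ft V) :
    subdiff O f xbar =
      convexHull ℝ
        ((fun t => gradient (ft t) xbar) '' {t : T | ft t xbar = f xbar}) :=
  Subset.antisymm (hrep.subdiff_subset_convexHull hVopen hVO hxV) <|
    convexHull_min (image_subset_iff.2 fun _ ht => hrep.gradient_mem_subdiff hf hVopen hVO hxV ht)
      convex_subdiff

theorem subdifferential_of_lowerC2 {m : ℕ} (hm : 1 ≤ m)
    (O : Set (EuclideanSpace ℝ (Fin m))) (hOne : O.Nonempty) (hOopen : IsOpen O)
    (hOconv : Convex ℝ O)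
    (f : EuclideanSpace ℝ (Fin m) → ℝ) (hf : ConvexOn ℝ O f)
    (xbar : EuclideanSpace ℝ (Fin m)) (hxbar : xbar ∈ O)
    (V : Set (EuclideanSpace ℝ (Fin m))) (hVopen : IsOpen V) (hxV : xbar ∈ V)
    (hVO : V ⊆ O)
    (T : Type) [TopologicalSpace T] [CompactSpace T]
    (ft : T → EuclideanSpace ℝ (Fin m) → ℝ)
    (hrep : IsLowerC2Rep T f ft V) :
    subdiff O f xbar =
      convexHull ℝ
        ((fun t => gradient (ft t) xbar) '' {t : T | ft t xbar = f xbar}) :=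
  subdifferential_of_lowerC2_general O f hf xbar V hVopen hxV hVO T ft hrep
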